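/- Suppose g ∈ Z[u_1^{±1},...,u_d^{±1}] satisfies conditions (A)–(D): Σ_k g_k = 0, Σ_k g_k k_i = 0 for all i, Σ_k g_k k_i k_j = 0 for i ≠ j, and Σ_k g_k k_i^2 is independent of i. Let γ ≥ d-2 be an integer, and define ω_0 = 0, ω_n = ‖n‖^{-γ} (Euclidean norm) for n ≠ 0. Then the convolution g·ω is absolutely summable: Σ_{n ∈ Z^d} |(g·ω)_n| < ∞. -/

import Mathlib

open Set

/-- The Euclidean norm of a lattice point `n ∈ ℤ^d`. -/
noncomputable def enorm {d : ℕ} (n : Fin d → ℤ) : ℝ :=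
  Real.sqrt (∑ i, ((n i : ℝ)) ^ 2)

/-- The convolution `(g·ω)ₙ = ∑ₖ gₖ ω_{n-k}`. -/
noncomputable def conv {d : ℕ} (g : (Fin d → ℤ) →₀ ℤ) (ω : (Fin d → ℤ) → ℝ)
    (n : Fin d → ℤ) : ℝ :=
  ∑ k ∈ g.support, (g k : ℝ) * ω (n - k)

lemma taylor2_bound {φ φ₁ φ₂ φ₃ : ℝ → ℝ} {K : ℝ}
    (h1 : ∀ t ∈ Icc (0:ℝ) 1, HasDerivAt φ (φ₁ t) t)
    (h2 : ∀ t ∈ Icc (0:ℝ) 1, HasDerivAt φ₁ (φ₂ t) t)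
    (h3 : ∀ t ∈ Icc (0:ℝ) 1, HasDerivAt φ₂ (φ₃ t) t)
    (hK : ∀ t ∈ Icc (0:ℝ) 1, |φ₃ t| ≤ K) :
    |φ 1 - (φ 0 + φ₁ 0 + φ₂ 0 / 2)| ≤ K := by
  have hK0 : 0 ≤ K := le_trans (abs_nonneg _) (hK 0 ⟨le_refl _, zero_le_one⟩)
  set ψ : ℝ → ℝ := fun t => φ t + φ₁ t * (1 - t) + φ₂ t * (1 - t)^2 / 2 with hψ
  have hD : ∀ t ∈ Icc (0:ℝ) 1, HasDerivAt ψ (φ₃ t * (1 - t)^2 / 2) t := by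
    intro t ht
    have d1 := h1 t ht
    have d2 := (h2 t ht).mul (((hasDerivAt_id t).const_sub 1))
    have d3 := ((h3 t ht).mul (((hasDerivAt_id t).const_sub 1).pow 2)).div_const 2
    have := (d1.add d2).add d3
    simp only [id_eq] at this ⊢
    refine this.congr_deriv ?_
    simp only [Pi.pow_apply]
    ring
  have key := Convex.norm_image_sub_le_of_norm_hasDerivWithin_le
    (f := ψ) (f' := fun t => φ₃ t * (1 - t)^2 / 2) (s := Icc (0:ℝ) 1) (C := K / 2)
    (fun t ht => (hD t ht).hasDerivWithinAt)
    (fun t ht => by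
      rw [Real.norm_eq_abs, abs_div, abs_mul, abs_two]
      have h1' : |(1 - t)^2| ≤ 1 := by
        rw [abs_of_nonneg (sq_nonneg _)]
        nlinarith [ht.1, ht.2]
      have h2' := mul_le_mul (hK t ht) h1' (abs_nonneg _) hK0
      nlinarith [h2'])
    (convex_Icc 0 1) ⟨le_refl _, zero_le_one⟩ ⟨zero_le_one, le_refl _⟩
  have e1 : ψ 1 = φ 1 := by simp [hψ]
  have e0 : ψ 0 = φ 0 + φ₁ 0 + φ₂ 0 / 2 := by simp [hψ]
  rw [e1, e0] at key
  rw [Real.norm_eq_abs, Real.norm_eq_abs] at key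
  simp only [sub_zero, abs_one, mul_one] at key
  linarith [key]

lemma quad_rpow_taylor (p a b c K : ℝ)
    (hq : ∀ t ∈ Icc (0:ℝ) 1, 0 < a - 2*b*t + c*t^2)
    (hK : ∀ t ∈ Icc (0:ℝ) 1,
      |6*c*(2*c*t-2*b)*(p*(p-1))*(a-2*b*t+c*t^2)^(p-2)
        + (2*c*t-2*b)^3*(p*(p-1)*(p-2))*(a-2*b*t+c*t^2)^(p-3)| ≤ K) :
    |(a-2*b+c)^p - (a^p + (-2*b)*p*a^(p-1)
        + (2*c*p*a^(p-1) + (2*b)^2*(p*(p-1))*a^(p-2))/2)| ≤ K := by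
  set q : ℝ → ℝ := fun t => a - 2*b*t + c*t^2 with hqdef
  have hq' : ∀ t : ℝ, HasDerivAt q (2*c*t - 2*b) t := by
    intro t
    have h := (((hasDerivAt_id t).const_mul (2*b)).const_sub a).add
      ((hasDerivAt_pow 2 t).const_mul c)
    simp only [id_eq] at h
    refine h.congr_deriv ?_
    norm_num
    ring
  set φ : ℝ → ℝ := fun t => q t ^ p with hφ
  set φ₁ : ℝ → ℝ := fun t => (2*c*t-2*b) * p * q t ^ (p-1) with hφ1
  set φ₂ : ℝ → ℝ := fun t => 2*c*p*(q t)^(p-1) + (2*c*t-2*b)^2*(p*(p-1))*(q t)^(p-2) with hφ2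
  set φ₃ : ℝ → ℝ := fun t => 6*c*(2*c*t-2*b)*(p*(p-1))*(q t)^(p-2)
      + (2*c*t-2*b)^3*(p*(p-1)*(p-2))*(q t)^(p-3) with hφ3
  have h1 : ∀ t ∈ Icc (0:ℝ) 1, HasDerivAt φ (φ₁ t) t := by
    intro t ht
    exact (hq' t).rpow_const (p := p) (Or.inl (hq t ht).ne')
  have h2 : ∀ t ∈ Icc (0:ℝ) 1, HasDerivAt φ₁ (φ₂ t) t := by
    intro t ht
    have hu : HasDerivAt (fun t => (2*c*t-2*b) * p) (2*c*p) t := by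
      have := (((hasDerivAt_id t).const_mul (2*c)).sub_const (2*b)).mul_const p
      simp only [id_eq] at this
      refine this.congr_deriv ?_; ring
    have hw := (hq' t).rpow_const (p := p-1) (Or.inl (hq t ht).ne')
    have := hu.mul hw
    refine this.congr_deriv ?_
    rw [hφ2, show p - 1 - 1 = p - 2 by ring]
    ring
  have h3 : ∀ t ∈ Icc (0:ℝ) 1, HasDerivAt φ₂ (φ₃ t) t := by
    intro t ht
    have hw1 := ((hq' t).rpow_const (p := p-1) (Or.inl (hq t ht).ne')).const_mul (2*c*p)
    have hu : HasDerivAt (fun t => (2*c*t-2*b)^2 * (p*(p-1))) (2*(2*c*t-2*b)*(2*c)*(p*(p-1))) t := by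
      have := ((((hasDerivAt_id t).const_mul (2*c)).sub_const (2*b)).pow 2).mul_const (p*(p-1))
      simp only [id_eq] at this
      refine this.congr_deriv ?_; ring
    have hw2 := (hq' t).rpow_const (p := p-2) (Or.inl (hq t ht).ne')
    have := hw1.add (hu.mul hw2)
    refine this.congr_deriv ?_
    rw [hφ3, show p - 1 - 1 = p - 2 by ring, show p - 2 - 1 = p - 3 by ring]
    ring
  have main := taylor2_bound h1 h2 h3 (by
    intro t ht
    have := hK t ht
    simpa [hφ3, hqdef] using this)
  have e1 : φ 1 = (a-2*b+c)^p := by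
    simp only [hφ, hqdef]
    norm_num
  have e0 : φ 0 + φ₁ 0 + φ₂ 0 / 2
      = a^p + (-2*b)*p*a^(p-1) + (2*c*p*a^(p-1) + (2*b)^2*(p*(p-1))*a^(p-2))/2 := by
    simp only [hφ, hφ1, hφ2, hqdef]
    norm_num
  rw [e1, e0] at main
  exact main

lemma summable_int_one_add_abs {e : ℝ} (he : 1 < e) :
    Summable (fun m : ℤ => ((1:ℝ) + |m|) ^ (-e)) := by
  have hnat : Summable (fun n : ℕ => ((1:ℝ) + n) ^ (-e)) := by
    have h0 : Summable (fun n : ℕ => ((n:ℝ)) ^ (-e)) :=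
      Real.summable_nat_rpow.mpr (by linarith)
    have := (summable_nat_add_iff 1).mpr h0
    refine this.congr fun n => ?_
    push_cast
    ring_nf
  refine Summable.of_nat_of_neg ?_ ?_ <;>
    · refine hnat.congr fun n => ?_
      push_cast
      simp [abs_of_nonneg, Nat.cast_nonneg]
lemma summable_pi_prod {d : ℕ} {f : ℤ → ℝ} (hf0 : ∀ m, 0 ≤ f m) (hf : Summable f) :
    Summable (fun n : Fin d → ℤ => ∏ i, f (n i)) := by
  induction d with
  | zero =>
    haveI : Subsingleton (Fin 0 → ℤ) := ⟨fun a b => funext fun i => i.elim0⟩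
    haveI : Finite (Fin 0 → ℤ) := Finite.of_subsingleton
    exact Summable.of_finite
  | succ d ih =>
    have key : Summable (fun x : ℤ × (Fin d → ℤ) => f x.1 * ∏ i, f (x.2 i)) := by
      apply Summable.mul_of_nonneg hf ih ?_ ?_
      · exact fun m => hf0 m
      · exact fun n => Finset.prod_nonneg fun i _ => hf0 _
    have h2 := key.comp_injective (Fin.consEquiv (fun _ => ℤ)).symm.injective
    refine h2.congr fun n => ?_
    simp only [Function.comp, Fin.consEquiv_symm_apply]
    rw [Fin.prod_univ_succ]
    rfl

lemma enorm_nonneg {d : ℕ} (n : Fin d → ℤ) : 0 ≤ _root_.enorm n := Real.sqrt_nonneg _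

lemma abs_coord_le_enorm {d : ℕ} (n : Fin d → ℤ) (i : Fin d) : |(n i : ℝ)| ≤ _root_.enorm n := by
  rw [← Real.sqrt_sq_eq_abs]
  exact Real.sqrt_le_sqrt (Finset.single_le_sum (fun j _ => sq_nonneg ((n j : ℝ))) (Finset.mem_univ i))

lemma finite_small_enorm {d : ℕ} (R : ℝ) : {n : Fin d → ℤ | _root_.enorm n < R}.Finite := by
  have : {n : Fin d → ℤ | _root_.enorm n < R} ⊆
      Set.pi Set.univ (fun _ : Fin d => Set.Icc (-(⌈R⌉₊ : ℤ)) (⌈R⌉₊ : ℤ)) := by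
    intro n hn
    simp only [Set.mem_pi, Set.mem_univ, Set.mem_Icc, forall_true_left]
    intro i
    have h1 : |(n i : ℝ)| ≤ _root_.enorm n := abs_coord_le_enorm n i
    have h2 : (|n i| : ℝ) ≤ (⌈R⌉₊ : ℝ) := by
      push_cast
      exact le_trans (by exact_mod_cast h1) (le_trans (le_of_lt hn) (Nat.le_ceil R))
    have h3 : |n i| ≤ (⌈R⌉₊ : ℤ) := by exact_mod_cast h2
    exact abs_le.mp h3
  exact Set.Finite.subset (Set.Finite.pi (fun _ => Set.finite_Icc _ _)) this

lemma summable_of_enorm_bound {d : ℕ} (hd : 1 ≤ d) (F : (Fin d → ℤ) → ℝ) (C R : ℝ)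
    (hb : ∀ n : Fin d → ℤ, R ≤ _root_.enorm n → |F n| ≤ C / _root_.enorm n ^ (d+1)) :
    Summable (fun n => |F n|) := by
  set e : ℝ := ((d:ℝ)+1)/d with he_def
  have hd0 : (0:ℝ) < d := by positivity
  have he : 1 < e := by
    rw [he_def, lt_div_iff₀ hd0]
    linarith
  set C' : ℝ := max C 0 * 2^(d+1) with hC'
  set G : (Fin d → ℤ) → ℝ := fun n => C' * ∏ i, ((1:ℝ) + |(n i : ℝ)|) ^ (-e) with hG
  have hGsum : Summable G := by
    apply Summable.mul_left
    apply summable_pi_prod (f := fun m : ℤ => ((1:ℝ) + |(m:ℝ)|) ^ (-e))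
    · intro m; positivity
    · exact (summable_int_one_add_abs he).congr (fun m => by push_cast; ring_nf)
  refine Summable.of_norm_bounded_eventually hGsum ?_
  rw [Filter.eventually_cofinite]
  apply Set.Finite.subset (finite_small_enorm (max R 1))
  intro n hn
  simp only [Set.mem_setOf_eq, not_le] at hn ⊢
  by_contra hcon
  push_neg at hcon
  -- hcon : max R 1 ≤ _root_.enorm n ; derive the bound, contradiction with ¬ ‖|F n|‖ ≤ G n
  set r := _root_.enorm n with hr
  have hr1 : (1:ℝ) ≤ r := le_trans (le_max_right R 1) hcon
  have hrR : R ≤ r := le_trans (le_max_left R 1) hcon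
  have hrpos : (0:ℝ) < r := lt_of_lt_of_le zero_lt_one hr1
  have hFb := hb n hrR
  -- product lower bound
  have hP : (0:ℝ) < ∏ i, ((1:ℝ) + |(n i : ℝ)|) := Finset.prod_pos (fun i _ => by positivity)
  have hPle : ∏ i, ((1:ℝ) + |(n i : ℝ)|) ≤ (2*r)^d := by
    calc ∏ i, ((1:ℝ) + |(n i : ℝ)|) ≤ ∏ _i : Fin d, (2*r) := by
          apply Finset.prod_le_prod (fun i _ => by positivity)
          intro i _
          have := abs_coord_le_enorm n i
          linarith
      _ = (2*r)^d := by rw [Finset.prod_const, Finset.card_univ, Fintype.card_fin]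
  have hprod_rpow : ∏ i, ((1:ℝ) + |(n i : ℝ)|) ^ (-e) = (∏ i, ((1:ℝ) + |(n i : ℝ)|)) ^ (-e) := by
    rw [← Real.finset_prod_rpow _ _ (fun i _ => by positivity)]
  have h2r : ((2*r)^d : ℝ) ^ (-e) = ((2*r)^(d+1))⁻¹ := by
    rw [← Real.rpow_natCast (2*r) d, ← Real.rpow_mul (by positivity)]
    rw [show (d:ℝ) * (-e) = -((d:ℝ)+1) by rw [he_def]; field_simp]
    rw [Real.rpow_neg (by positivity)]
    congr 1
    rw [← Real.rpow_natCast (2*r) (d+1)]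
    push_cast
    ring_nf
  have hkey : C / r^(d+1) ≤ G n := by
    rw [hG]
    simp only
    rw [hprod_rpow]
    have h1 : ((2*r)^d : ℝ) ^ (-e) ≤ (∏ i, ((1:ℝ) + |(n i : ℝ)|)) ^ (-e) :=
      Real.rpow_le_rpow_of_nonpos hP hPle (by linarith)
    calc C / r^(d+1) ≤ max C 0 / r^(d+1) := by
          gcongr
          exact le_max_left C 0
      _ = C' * ((2*r)^(d+1))⁻¹ := by
          rw [hC', mul_pow]
          field_simp
      _ = C' * ((2*r)^d : ℝ) ^ (-e) := by rw [h2r]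
      _ ≤ C' * (∏ i, ((1:ℝ) + |(n i : ℝ)|)) ^ (-e) := by
          apply mul_le_mul_of_nonneg_left h1 (by positivity)
  rw [Real.norm_eq_abs, abs_abs] at hn
  exact absurd hn (not_lt.mpr (le_trans hFb hkey))

lemma rpow_neg_half_eq (y : ℝ) (hy : 0 < y) (γ : ℕ) :
    y ^ (-(γ:ℝ)/2) = 1 / Real.sqrt y ^ γ := by
  rw [Real.sqrt_eq_rpow, ← Real.rpow_natCast (y ^ ((1:ℝ)/2)) γ, ← Real.rpow_mul hy.le,
    neg_div, Real.rpow_neg hy.le, one_div]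
  congr 1
  ring_nf

lemma pow_two_rpow' (x : ℝ) (hx : 0 < x) (j : ℕ) (e : ℝ) (he : 2*e = -(j:ℝ)) :
    (x^2) ^ e = (x^j)⁻¹ := by
  rw [← Real.rpow_natCast x 2, ← Real.rpow_mul hx.le,
    show ((2:ℕ):ℝ) * e = -(j:ℝ) by push_cast; linarith,
    Real.rpow_neg hx.le, Real.rpow_natCast]

lemma mul4_le {w x y z W X Y Z : ℝ} (h1 : |w| ≤ W) (h2 : |x| ≤ X) (h3 : |y| ≤ Y) (h4 : |z| ≤ Z) :
    |w| * |x| * |y| * |z| ≤ W*X*Y*Z := by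
  have n1 := abs_nonneg w; have n2 := abs_nonneg x; have n3 := abs_nonneg y; have n4 := abs_nonneg z
  have m1 : |w| * |x| ≤ W*X := mul_le_mul h1 h2 n2 (le_trans n1 h1)
  have m2 : |w| * |x| * |y| ≤ W*X*Y := mul_le_mul m1 h3 n3 (mul_nonneg (le_trans n1 h1) (le_trans n2 h2))
  exact mul_le_mul m2 h4 n4 (mul_nonneg (mul_nonneg (le_trans n1 h1) (le_trans n2 h2)) (le_trans n3 h3))

lemma mul3_le {x y z X Y Z : ℝ} (h2 : |x| ≤ X) (h3 : |y| ≤ Y) (h4 : |z| ≤ Z) :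
    |x| * |y| * |z| ≤ X*Y*Z := by
  have := mul4_le (le_refl |(1:ℝ)|) h2 h3 h4
  simpa using this

lemma key_bound (d γ : ℕ) (hdγ : d + 1 ≤ γ + 3) (p M r bk ck : ℝ)
    (hp : p = -(γ:ℝ)/2) (hM1 : 1 ≤ M) (hr4 : 4*M ≤ r)
    (hck0 : 0 ≤ ck) (hckM : ck ≤ M^2) (hbk : |bk| ≤ r*M) :
    |(r^2 - 2*bk + ck)^p - ((r^2)^p + (-2*bk)*p*(r^2)^(p-1)
        + (2*ck*p*(r^2)^(p-1) + (2*bk)^2*(p*(p-1))*(r^2)^(p-2))/2)|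
      ≤ ((48*|p*(p-1)| + 512*|p*(p-1)*(p-2)|) * M^3 * 2^(d+1)) / r^(d+1) := by
  have hγ0 : (0:ℝ) ≤ γ := Nat.cast_nonneg γ
  have hp0 : p ≤ 0 := by rw [hp]; linarith
  have hp2 : 2*p = -(γ:ℝ) := by rw [hp]; ring
  have hM0 : (0:ℝ) ≤ M := by linarith
  have hrpos : (0:ℝ) < r := by linarith
  have hr1 : (1:ℝ) ≤ r := by linarith
  have hMr0 : (0:ℝ) ≤ r*M := mul_nonneg hrpos.le hM0
  have hquad : ∀ t ∈ Icc (0:ℝ) 1, r^2/4 ≤ r^2 - 2*bk*t + ck*t^2 := by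
    intro t ht
    have hbt : bk*t ≤ r*M := by
      nlinarith [le_abs_self bk, abs_nonneg bk, ht.1, ht.2]
    have hct : 0 ≤ ck*t^2 := mul_nonneg hck0 (sq_nonneg t)
    have h8 : 0 ≤ 3*(r*r) - 8*(r*M) := by nlinarith
    nlinarith [hbt, hct, h8]
  have hq0 : (0:ℝ) < r^2/4 := by positivity
  set x : ℝ := r/2 with hxdef
  have hrx : r = 2*x := by rw [hxdef]; ring
  have hxpos : (0:ℝ) < x := by rw [hxdef]; linarith
  have hx1 : (1:ℝ) ≤ x := by rw [hxdef]; linarith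
  have hax : r^2/4 = x^2 := by rw [hxdef]; ring
  have hE4 : (r^2/4)^(p-2) = (x^(γ+4))⁻¹ := by
    rw [hax]; exact pow_two_rpow' x hxpos (γ+4) (p-2) (by push_cast; linarith)
  have hE6 : (r^2/4)^(p-3) = (x^(γ+6))⁻¹ := by
    rw [hax]; exact pow_two_rpow' x hxpos (γ+6) (p-3) (by push_cast; linarith)
  apply quad_rpow_taylor
  · intro t ht
    exact lt_of_lt_of_le hq0 (hquad t ht)
  intro t ht
  have hqt := hquad t ht
  have hqpos : (0:ℝ) < r^2 - 2*bk*t + ck*t^2 := lt_of_lt_of_le hq0 hqt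
  have h2 : (r^2 - 2*bk*t + ck*t^2)^(p-2) ≤ (r^2/4)^(p-2) :=
    Real.rpow_le_rpow_of_nonpos hq0 hqt (by linarith)
  have h3 : (r^2 - 2*bk*t + ck*t^2)^(p-3) ≤ (r^2/4)^(p-3) :=
    Real.rpow_le_rpow_of_nonpos hq0 hqt (by linarith)
  have hqp2pos : (0:ℝ) < (r^2 - 2*bk*t + ck*t^2)^(p-2) := Real.rpow_pos_of_pos hqpos _
  have hqp3pos : (0:ℝ) < (r^2 - 2*bk*t + ck*t^2)^(p-3) := Real.rpow_pos_of_pos hqpos _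
  have hlin : |2*ck*t - 2*bk| ≤ 4*r*M := by
    rw [abs_le]
    have h4 := le_abs_self bk
    have h5 := neg_abs_le bk
    have h7 : 0 ≤ ck*t := mul_nonneg hck0 ht.1
    have hct_le : ck*t ≤ ck := by
      have := mul_le_mul_of_nonneg_left ht.2 hck0
      simpa using this
    have h9 : M^2*4 ≤ r*M := by
      have h10 := mul_le_mul_of_nonneg_right hr4 hM0
      linarith only [h10]
    constructor
    · linarith only [hbk, h4, h5, h7, hct_le, hMr0, h9, hckM, hck0]
    · linarith only [hbk, h4, h5, h7, hct_le, hMr0, h9, hckM, hck0]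
  have hb1 : |6*ck*(2*ck*t-2*bk)*(p*(p-1))*(r^2 - 2*bk*t + ck*t^2)^(p-2)|
      ≤ (6*M^2)*(4*r*M)*(|p*(p-1)|)*((r^2/4)^(p-2)) := by
    rw [abs_mul, abs_mul, abs_mul]
    apply mul4_le
    · rw [abs_of_nonneg (by linarith : (0:ℝ) ≤ 6*ck)]; linarith
    · exact hlin
    · exact le_refl _
    · rw [abs_of_pos hqp2pos]; exact h2
  have hb2 : |(2*ck*t-2*bk)^3*(p*(p-1)*(p-2))*(r^2 - 2*bk*t + ck*t^2)^(p-3)|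
      ≤ (4*r*M)^3*(|p*(p-1)*(p-2)|)*((r^2/4)^(p-3)) := by
    rw [abs_mul, abs_mul]
    apply mul3_le
    · rw [abs_pow]; exact pow_le_pow_left₀ (abs_nonneg _) hlin 3
    · exact le_refl _
    · rw [abs_of_pos hqp3pos]; exact h3
  have hxne : x ≠ 0 := ne_of_gt hxpos
  have hxp3 : (0:ℝ) < x^(γ+3) := by positivity
  have step1 : (6*M^2)*(4*r*M)*(|p*(p-1)|)*((r^2/4)^(p-2)) = 48*M^3*(|p*(p-1)|)/x^(γ+3) := by
    rw [hE4, pow_succ x (γ+3), hrx]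
    field_simp
    ring
  have step2 : (4*r*M)^3*(|p*(p-1)*(p-2)|)*((r^2/4)^(p-3)) = 512*M^3*(|p*(p-1)*(p-2)|)/x^(γ+3) := by
    rw [hE6, show γ+6 = (γ+3)+3 by ring, pow_add x (γ+3) 3, hrx]
    field_simp
    ring
  have hmono : x^(d+1) ≤ x^(γ+3) := pow_le_pow_right₀ hx1 (by omega)
  have hxd : x^(d+1) = r^(d+1)/2^(d+1) := by rw [hxdef, div_pow]
  have step3 : 48*M^3*(|p*(p-1)|)/x^(γ+3) + 512*M^3*(|p*(p-1)*(p-2)|)/x^(γ+3)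
      ≤ (48*(|p*(p-1)|)+512*(|p*(p-1)*(p-2)|))*M^3/x^(d+1) := by
    rw [← add_div,
      show 48*M^3*(|p*(p-1)|) + 512*M^3*(|p*(p-1)*(p-2)|)
        = (48*(|p*(p-1)|)+512*(|p*(p-1)*(p-2)|))*M^3 by ring]
    apply div_le_div_of_nonneg_left ?_ (by positivity) hmono
    positivity
  have step4 : (48*(|p*(p-1)|)+512*(|p*(p-1)*(p-2)|))*M^3/x^(d+1)
      = ((48*|p*(p-1)| + 512*|p*(p-1)*(p-2)|) * M^3 * 2^(d+1)) / r^(d+1) := by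
    rw [hxd]
    have h2d : ((2:ℝ))^(d+1) ≠ 0 := by positivity
    have hrd : r^(d+1) ≠ 0 := by positivity
    field_simp
  calc |6*ck*(2*ck*t-2*bk)*(p*(p-1))*(r^2 - 2*bk*t + ck*t^2)^(p-2)
        + (2*ck*t-2*bk)^3*(p*(p-1)*(p-2))*(r^2 - 2*bk*t + ck*t^2)^(p-3)|
      ≤ (6*M^2)*(4*r*M)*(|p*(p-1)|)*((r^2/4)^(p-2))
        + (4*r*M)^3*(|p*(p-1)*(p-2)|)*((r^2/4)^(p-3)) :=
        le_trans (abs_add_le _ _) (add_le_add hb1 hb2)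
    _ ≤ (48*(|p*(p-1)|)+512*(|p*(p-1)*(p-2)|))*M^3/x^(d+1) := by rw [step1, step2]; exact step3
    _ = _ := step4

lemma pow_two_rpow (x : ℝ) (hx : 0 < x) (j : ℕ) (e : ℝ) (he : 2*e = -(j:ℝ)) :
    (x^2) ^ e = (x^j)⁻¹ := by
  rw [← Real.rpow_natCast x 2, ← Real.rpow_mul hx.le,
    show ((2:ℕ):ℝ) * e = -(j:ℝ) by push_cast; linarith,
    Real.rpow_neg hx.le, Real.rpow_natCast]

set_option maxHeartbeats 2000000 in
/-- If `g` satisfies conditions (A)–(D) and `γ ≥ d-2`, then the convolution of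
`g` with `ωₙ = ‖n‖^{-γ}` (Euclidean norm, `ω₀ = 0`) is absolutely summable. -/
theorem stmt5 (d : ℕ) (hd : 2 ≤ d) (g : (Fin d → ℤ) →₀ ℤ) (γ : ℕ)
    (hγ : (d : ℤ) - 2 ≤ (γ : ℤ))
    (hA : ∑ k ∈ g.support, g k = 0)
    (hB : ∀ i : Fin d, ∑ k ∈ g.support, g k * k i = 0)
    (hC : ∀ i j : Fin d, i ≠ j → ∑ k ∈ g.support, g k * (k i * k j) = 0)
    (hD : ∀ i j : Fin d, i ≠ j →
      ∑ k ∈ g.support, g k * ((k i) ^ 2 - (k j) ^ 2) = 0) :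
    Summable (fun n : Fin d → ℤ =>
      |conv g (fun m => if m = 0 then 0 else 1 / _root_.enorm m ^ γ) n|) := by
  classical
  have hdγ3 : d + 1 ≤ γ + 3 := by omega
  have hcase_imp : (γ:ℤ) ≠ (d:ℤ)-2 → d+1 ≤ γ+2 := by omega
  set ω : (Fin d → ℤ) → ℝ := fun m => if m = 0 then 0 else 1 / _root_.enorm m ^ γ with hω
  have hd1 : 1 ≤ d := le_trans one_le_two hd
  set p : ℝ := -(γ:ℝ)/2 with hp
  have hγ0 : (0:ℝ) ≤ γ := Nat.cast_nonneg γ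
  have hp0 : p ≤ 0 := by rw [hp]; linarith
  have hp2 : 2*p = -(γ:ℝ) := by rw [hp]; ring
  set i₀ : Fin d := ⟨0, by omega⟩ with hi₀
  set s : ℤ := ∑ k ∈ g.support, g k * (k i₀)^2 with hs
  have hsq : ∀ i, ∑ k ∈ g.support, g k * (k i)^2 = s := by
    intro i
    by_cases h : i = i₀
    · rw [h, hs]
    · have hDi := hD i i₀ h
      have expand : ∑ k ∈ g.support, g k * ((k i)^2 - (k i₀)^2)
          = (∑ k ∈ g.support, g k * (k i)^2) - ∑ k ∈ g.support, g k * (k i₀)^2 := by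
        rw [← Finset.sum_sub_distrib]
        exact Finset.sum_congr rfl fun k _ => by ring
      rw [expand] at hDi
      rw [hs]
      linarith
  have hcov : ∀ i j, ∑ k ∈ g.support, g k * (k i * k j) = if i = j then s else 0 := by
    intro i j
    by_cases h : i = j
    · subst h
      rw [if_pos rfl, ← hsq i]
      exact Finset.sum_congr rfl fun k _ => by ring
    · rw [if_neg h]; exact hC i j h
  set M : ℝ := 1 + ∑ k ∈ g.support, _root_.enorm k with hM
  have hsum_nonneg : 0 ≤ ∑ k ∈ g.support, _root_.enorm k :=
    Finset.sum_nonneg fun k _ => enorm_nonneg k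
  have hM1 : 1 ≤ M := by rw [hM]; linarith
  have hMk : ∀ k ∈ g.support, _root_.enorm k ≤ M := by
    intro k hk
    have := Finset.single_le_sum (f := fun k => _root_.enorm k) (fun j _ => enorm_nonneg j) hk
    rw [hM]; linarith
  set P1 : ℝ := |p*(p-1)| with hP1
  set P2 : ℝ := |p*(p-1)*(p-2)| with hP2
  set CK : ℝ := (48*P1 + 512*P2) * M^3 * 2^(d+1) with hCK
  set CT : ℝ := |(s:ℝ)*p*((d:ℝ)-(γ:ℝ)-2)| with hCT
  set Glen : ℝ := ∑ k ∈ g.support, |(g k : ℝ)| with hGlen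
  apply summable_of_enorm_bound hd1 _ (CT + Glen*CK) (4*M)
  intro n hrn
  set r : ℝ := _root_.enorm n with hr
  have hr4 : 4*M ≤ r := hrn
  have hrge4 : (4:ℝ) ≤ r := by linarith
  have hr1 : (1:ℝ) ≤ r := by linarith
  have hrpos : (0:ℝ) < r := by linarith
  set a : ℝ := ∑ i, ((n i : ℝ))^2 with ha
  have ha_r : a = r^2 := by
    rw [hr, _root_.enorm, Real.sq_sqrt (Finset.sum_nonneg fun i _ => sq_nonneg _)]
  have hapos : 0 < a := by rw [ha_r]; positivity
  set b : (Fin d → ℤ) → ℝ := fun k => ∑ i, (n i : ℝ) * (k i : ℝ) with hb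
  set c : (Fin d → ℤ) → ℝ := fun k => ∑ i, ((k i : ℝ))^2 with hc
  have hc0 : ∀ k, 0 ≤ c k := fun k => Finset.sum_nonneg fun i _ => sq_nonneg _
  have hcM : ∀ k ∈ g.support, c k ≤ M^2 := by
    intro k hk
    have h1 : Real.sqrt (c k) ≤ M := hMk k hk
    have := Real.sq_sqrt (hc0 k)
    nlinarith [Real.sqrt_nonneg (c k)]
  have hbM : ∀ k ∈ g.support, |b k| ≤ r * M := by
    intro k hk
    have hCS : (b k)^2 ≤ a * c k := by
      rw [hb, ha, hc]
      exact Finset.sum_mul_sq_le_sq_mul_sq _ _ _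
    have h1 : Real.sqrt (c k) ≤ M := hMk k hk
    have h2 : |b k| = Real.sqrt ((b k)^2) := (Real.sqrt_sq_eq_abs _).symm
    rw [h2]
    calc Real.sqrt ((b k)^2) ≤ Real.sqrt (a * c k) := Real.sqrt_le_sqrt hCS
      _ = Real.sqrt a * Real.sqrt (c k) := Real.sqrt_mul hapos.le _
      _ = r * Real.sqrt (c k) := by rw [ha_r, Real.sqrt_sq hrpos.le]
      _ ≤ r * M := by nlinarith [Real.sqrt_nonneg (c k)]
  -- the quadratic is bounded below on [0,1]
  have hquad : ∀ k ∈ g.support, ∀ t ∈ Icc (0:ℝ) 1, a/4 ≤ a - 2*(b k)*t + (c k)*t^2 := by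
    intro k hk t ht
    have hbk := hbM k hk
    have hck := hc0 k
    have hbt : (b k)*t ≤ r*M := by
      nlinarith [le_abs_self (b k), abs_nonneg (b k), ht.1, ht.2]
    have hct : 0 ≤ (c k)*t^2 := mul_nonneg hck (sq_nonneg t)
    have h8 : 0 ≤ 3*(r*r) - 8*(r*M) := by nlinarith
    rw [ha_r]
    nlinarith [hbt, hct, h8]
  have hP1n : (0:ℝ) ≤ P1 := hP1 ▸ abs_nonneg _
  have hP2n : (0:ℝ) ≤ P2 := hP2 ▸ abs_nonneg _
  have key : ∀ k ∈ g.support, |(a - 2*(b k) + c k)^p - (a^p + (-2*(b k))*p*a^(p-1)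
        + (2*(c k)*p*a^(p-1) + (2*(b k))^2*(p*(p-1))*a^(p-2))/2)| ≤ CK / r^(d+1) := by
    intro k hk
    rw [ha_r, hCK, hP1, hP2]
    exact key_bound d γ hdγ3 p M r (b k) (c k) hp hM1 hr4 (hc0 k) (hcM k hk) (hbM k hk)
  have hω_eq : ∀ k ∈ g.support, ω (n - k) = (a - 2*(b k) + c k)^p := by
    intro k hk
    have hq1 : a - 2*(b k) + c k = ∑ i, ((n i : ℝ) - (k i : ℝ))^2 := by
      rw [ha, hb, hc]
      rw [Finset.sum_congr rfl (fun i (_ : i ∈ Finset.univ) =>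
        (by ring : ((n i:ℝ) - (k i:ℝ))^2 = (n i:ℝ)^2 - 2*((n i:ℝ)*(k i:ℝ)) + ((k i:ℝ))^2)),
        Finset.sum_add_distrib, Finset.sum_sub_distrib, ← Finset.mul_sum]
    have hq1' := hquad k hk 1 ⟨zero_le_one, le_refl 1⟩
    have hpos1 : 0 < a - 2*(b k) + c k := by
      have h0 : a - 2*(b k)*1 + (c k)*1^2 = a - 2*(b k) + c k := by ring
      rw [h0] at hq1'
      linarith [hapos]
    have hne : (n - k : Fin d → ℤ) ≠ 0 := by
      intro h0
      have hz : ∀ i, (n i : ℝ) - (k i : ℝ) = 0 := by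
        intro i
        have := congrFun h0 i
        simp only [Pi.sub_apply, Pi.zero_apply] at this
        have heq : (n i : ℤ) = k i := by linarith [sub_eq_zero.mp this]
        rw [heq]; ring
      have : a - 2*(b k) + c k = 0 := by
        rw [hq1]
        apply Finset.sum_eq_zero
        intro i _
        rw [hz i]; ring
      linarith
    have henk : _root_.enorm (n - k) = Real.sqrt (a - 2*(b k) + c k) := by
      rw [_root_.enorm, hq1]
      congr 1
      apply Finset.sum_congr rfl
      intro i _
      congr 1
      push_cast [Pi.sub_apply]
      ring
    rw [hω]
    simp only [if_neg hne]
    rw [henk, hp, rpow_neg_half_eq _ hpos1 γ]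
  -- the integer sums
  have S0 : ∑ k ∈ g.support, (g k:ℝ) = 0 := by exact_mod_cast hA
  have S1 : ∑ k ∈ g.support, (g k:ℝ) * b k = 0 := by
    rw [hb]
    calc ∑ k ∈ g.support, (g k:ℝ) * ∑ i, (n i:ℝ)*(k i:ℝ)
        = ∑ k ∈ g.support, ∑ i, (n i:ℝ) * ((g k:ℝ) * (k i:ℝ)) := by
          refine Finset.sum_congr rfl fun k _ => ?_
          rw [Finset.mul_sum]
          exact Finset.sum_congr rfl fun i _ => by ring
      _ = ∑ i, ∑ k ∈ g.support, (n i:ℝ) * ((g k:ℝ)*(k i:ℝ)) := Finset.sum_comm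
      _ = 0 := by
          apply Finset.sum_eq_zero
          intro i _
          rw [← Finset.mul_sum]
          have hz : ∑ k ∈ g.support, (g k:ℝ)*(k i:ℝ) = 0 := by exact_mod_cast hB i
          rw [hz, mul_zero]
  have S2 : ∑ k ∈ g.support, (g k:ℝ) * c k = (d:ℝ) * (s:ℝ) := by
    rw [hc]
    calc ∑ k ∈ g.support, (g k:ℝ) * ∑ i, ((k i:ℝ))^2
        = ∑ k ∈ g.support, ∑ i, (g k:ℝ) * ((k i:ℝ))^2 := by
          exact Finset.sum_congr rfl fun k _ => Finset.mul_sum _ _ _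
      _ = ∑ i : Fin d, ∑ k ∈ g.support, (g k:ℝ) * ((k i:ℝ))^2 := Finset.sum_comm
      _ = ∑ _i : Fin d, (s:ℝ) := by
          refine Finset.sum_congr rfl fun i _ => ?_
          exact_mod_cast hsq i
      _ = (d:ℝ) * (s:ℝ) := by
          rw [Finset.sum_const, Finset.card_univ, Fintype.card_fin, nsmul_eq_mul]
  have S3 : ∑ k ∈ g.support, (g k:ℝ) * (b k)^2 = (s:ℝ) * a := by
    have expand : ∀ k : Fin d → ℤ, (b k)^2
        = ∑ i, ∑ j, ((n i:ℝ)*(n j:ℝ))*((k i:ℝ)*(k j:ℝ)) := by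
      intro k
      rw [hb, sq, Finset.sum_mul_sum]
      exact Finset.sum_congr rfl fun i _ => Finset.sum_congr rfl fun j _ => by ring
    calc ∑ k ∈ g.support, (g k:ℝ) * (b k)^2
        = ∑ k ∈ g.support, ∑ i, ∑ j, ((n i:ℝ)*(n j:ℝ))*((g k:ℝ)*((k i:ℝ)*(k j:ℝ))) := by
          refine Finset.sum_congr rfl fun k _ => ?_
          rw [expand k, Finset.mul_sum]
          refine Finset.sum_congr rfl fun i _ => ?_
          rw [Finset.mul_sum]
          exact Finset.sum_congr rfl fun j _ => by ring
      _ = ∑ i, ∑ j, ∑ k ∈ g.support, ((n i:ℝ)*(n j:ℝ))*((g k:ℝ)*((k i:ℝ)*(k j:ℝ))) := by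
          rw [Finset.sum_comm]
          exact Finset.sum_congr rfl fun i _ => Finset.sum_comm
      _ = ∑ i, ∑ j, ((n i:ℝ)*(n j:ℝ)) * (if i = j then (s:ℝ) else 0) := by
          refine Finset.sum_congr rfl fun i _ => Finset.sum_congr rfl fun j _ => ?_
          rw [← Finset.mul_sum]
          congr 1
          have := hcov i j
          split
          · next h => 
            have hz : ∑ k ∈ g.support, (g k:ℝ)*((k i:ℝ)*(k j:ℝ)) = (s:ℝ) := by
              rw [if_pos h] at this; exact_mod_cast this
            exact hz
          · next h =>
            have hz : ∑ k ∈ g.support, (g k:ℝ)*((k i:ℝ)*(k j:ℝ)) = 0 := by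
              rw [if_neg h] at this; exact_mod_cast this
            exact hz
      _ = ∑ i, ((n i:ℝ)*(n i:ℝ)) * (s:ℝ) := by
          refine Finset.sum_congr rfl fun i _ => ?_
          simp only [mul_ite, mul_zero]
          rw [Finset.sum_ite_eq]
          simp
      _ = (s:ℝ) * a := by
          rw [ha, ← Finset.sum_mul, mul_comm]
          congr 1
          exact Finset.sum_congr rfl fun i _ => by ring
  set T : ℝ := ∑ k ∈ g.support, (g k:ℝ) * (a^p + (-2*(b k))*p*a^(p-1)
      + (2*(c k)*p*a^(p-1) + (2*(b k))^2*(p*(p-1))*a^(p-2))/2) with hT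
  have hTval : T = (s:ℝ)*p*((d:ℝ)-(γ:ℝ)-2)*a^(p-1) := by
    have hrel : a^(p-2)*a = a^(p-1) := by
      rw [show p-1 = p-2+1 by ring, Real.rpow_add_one hapos.ne' (p-2)]
    rw [hT]
    rw [Finset.sum_congr rfl (fun k (_ : k ∈ g.support) =>
      (by ring : (g k:ℝ) * (a^p + (-2*(b k))*p*a^(p-1)
        + (2*(c k)*p*a^(p-1) + (2*(b k))^2*(p*(p-1))*a^(p-2))/2)
      = a^p * (g k:ℝ) + (-2*p*a^(p-1)) * ((g k:ℝ)*(b k))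
        + ((p*a^(p-1))*((g k:ℝ)*(c k)) + (2*(p*(p-1))*a^(p-2))*((g k:ℝ)*(b k)^2))))]
    rw [Finset.sum_add_distrib, Finset.sum_add_distrib, Finset.sum_add_distrib,
        ← Finset.mul_sum, ← Finset.mul_sum, ← Finset.mul_sum, ← Finset.mul_sum]
    rw [S0, S1, S2, S3]
    rw [mul_zero, mul_zero]
    linear_combination (2*(p*(p-1))*(s:ℝ))*hrel + ((s:ℝ)*a^(p-1))*hp2
  have hT_bound : |T| ≤ CT / r^(d+1) := by
    have hCTn : 0 ≤ CT := hCT ▸ abs_nonneg _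
    by_cases hcase : (γ:ℤ) = (d:ℤ) - 2
    · have hz : (d:ℝ)-(γ:ℝ)-2 = 0 := by
        have : (γ:ℝ) = (d:ℝ) - 2 := by exact_mod_cast hcase
        linarith
      rw [hTval, hz]
      simp only [mul_zero, zero_mul, abs_zero]
      positivity
    · have hγd : d + 1 ≤ γ + 2 := hcase_imp hcase
      have hE2 : a^(p-1) = (r^(γ+2))⁻¹ := by
        rw [ha_r]
        exact pow_two_rpow' r hrpos (γ+2) (p-1) (by push_cast; linarith [hp2])
      rw [hTval, hE2, hCT]
      rw [abs_mul, abs_inv, abs_pow, abs_of_pos hrpos, div_eq_mul_inv]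
      apply mul_le_mul_of_nonneg_left ?_ (abs_nonneg _)
      apply inv_anti₀ (by positivity)
      exact pow_le_pow_right₀ hr1 hγd
  have hconv_def : conv g ω n = ∑ k ∈ g.support, (g k:ℝ) * ω (n-k) := rfl
  have hsplit : conv g ω n - T = ∑ k ∈ g.support, (g k:ℝ)
      * ((a - 2*(b k) + c k)^p - (a^p + (-2*(b k))*p*a^(p-1)
      + (2*(c k)*p*a^(p-1) + (2*(b k))^2*(p*(p-1))*a^(p-2))/2)) := by
    rw [hconv_def, hT, ← Finset.sum_sub_distrib]
    refine Finset.sum_congr rfl fun k hk => ?_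
    rw [hω_eq k hk]
    ring
  have hsplit_bound : |conv g ω n - T| ≤ Glen * (CK / r^(d+1)) := by
    rw [hsplit]
    calc |∑ k ∈ g.support, (g k:ℝ)
        * ((a - 2*(b k) + c k)^p - (a^p + (-2*(b k))*p*a^(p-1)
        + (2*(c k)*p*a^(p-1) + (2*(b k))^2*(p*(p-1))*a^(p-2))/2))|
        ≤ ∑ k ∈ g.support, |(g k:ℝ)
        * ((a - 2*(b k) + c k)^p - (a^p + (-2*(b k))*p*a^(p-1)
        + (2*(c k)*p*a^(p-1) + (2*(b k))^2*(p*(p-1))*a^(p-2))/2))| :=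
          Finset.abs_sum_le_sum_abs _ _
      _ ≤ ∑ k ∈ g.support, |(g k:ℝ)| * (CK / r^(d+1)) := by
          refine Finset.sum_le_sum fun k hk => ?_
          rw [abs_mul]
          exact mul_le_mul_of_nonneg_left (key k hk) (abs_nonneg _)
      _ = Glen * (CK / r^(d+1)) := by rw [← Finset.sum_mul, hGlen]
  calc |conv g ω n| = |T + (conv g ω n - T)| := by ring_nf
    _ ≤ |T| + |conv g ω n - T| := abs_add_le _ _
    _ ≤ CT / r^(d+1) + Glen * (CK / r^(d+1)) := add_le_add hT_bound hsplit_bound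
    _ = (CT + Glen*CK) / r^(d+1) := by ring
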